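/- Let G be a finite edge-labeled directed graph with edge set E ⊆ V × A × V, and let 𝒢 = (N, A, R) be a context-free grammar in norm form. Define Θ as the least set of triples (v, a, b) ∈ N × V × V closed under: (i) (v, a, a) ∈ Θ whenever a ∈ V and v → ε ∈ R; (ii) (v, a, b) ∈ Θ whenever (a, l, b) ∈ E and v → l ∈ R; (iii) if (u, a, c) ∈ Θ and (w, c, b) ∈ Θ and v → uw ∈ R then (v, a, b) ∈ Θ. Then (v, a, b) ∈ Θ if and only if there exists a path from a to b in the graph whose label string belongs to L(𝒢_v). -/

import Mathlib

inductive GSym (N A : Type) : Type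
  | nt : N → GSym N A
  | tm : A → GSym N A

structure CFG (N A : Type) : Type where
  rules : Set (N × List (GSym N A))

def CFG.Step {N A : Type} (G : CFG N A) (s t : List (GSym N A)) : Prop :=
  ∃ (x y : List (GSym N A)) (v : N) (w : List (GSym N A)),
    (v, w) ∈ G.rules ∧ s = x ++ GSym.nt v :: y ∧ t = x ++ w ++ y

def CFG.Derives {N A : Type} (G : CFG N A) : List (GSym N A) → List (GSym N A) → Prop :=
  Relation.ReflTransGen G.Step

def CFG.Lang {N A : Type} (G : CFG N A) (v : N) : Set (List A) :=
  {s | G.Derives [GSym.nt v] (s.map GSym.tm)}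

/-- A path from `a` to `b` in an edge-labeled directed graph `E`, with the given
label string. -/
inductive PathLabel {V A : Type} (E : Set (V × A × V)) : V → List A → V → Prop
  | nil (a : V) : PathLabel E a [] a
  | cons {a c b : V} {l : A} {ls : List A} :
      (a, l, c) ∈ E → PathLabel E c ls b → PathLabel E a (l :: ls) b

/-- The context-free relation of non-terminal `v` on graph `E`: pairs connected by a
path whose label string lies in `L(G_v)`. -/
def RelCF {V A N : Type} (G : CFG N A) (E : Set (V × A × V)) (v : N) : Set (V × V) :=
  {p | ∃ ls ∈ G.Lang v, PathLabel E p.1 ls p.2}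

/-- A grammar is in norm form if every rule is of the form v → uw, v → l, or v → ε. -/
def CFG.NormForm {N A : Type} (G : CFG N A) : Prop :=
  ∀ r ∈ G.rules, (∃ u w : N, r.2 = [GSym.nt u, GSym.nt w]) ∨
    (∃ a : A, r.2 = [GSym.tm a]) ∨ r.2 = []

/-- The least set Θ of triples closed under the three rules of the conjunctive
context-free recognizer. -/
inductive Theta {V A N : Type} (E : Set (V × A × V)) (G : CFG N A) : N → V → V → Prop
  | eps {v : N} (a : V) : (v, ([] : List (GSym N A))) ∈ G.rules → Theta E G v a a
  | tm {v : N} {a b : V} {l : A} :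
      (a, l, b) ∈ E → (v, [GSym.tm l]) ∈ G.rules → Theta E G v a b
  | comp {u w v : N} {a c b : V} :
      Theta E G u a c → Theta E G w c b → (v, [GSym.nt u, GSym.nt w]) ∈ G.rules →
      Theta E G v a b

/-!
Soundness is an induction on `Θ`, concatenating derivations and paths. For completeness,
let a sentential form label a walk from `a` to `b` when its symbols can be matched in order,
each terminal `l` by an `l`-labelled edge and each nonterminal `u` by a triple `(u, c, d) ∈ Θ`.
Since the grammar is in norm form, the closure rules of `Θ` are exactly what is needed to
pull such a walk back along a derivation step. So a derivation `v ⇒* ls` pulls the path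
labelled `ls` back to a walk labelled `[v]`, i.e. a triple `(v, a, b) ∈ Θ`.
-/

variable {V A N : Type}

namespace CFG

variable {G : CFG N A}

lemma Step.append_left {s t : List (GSym N A)} (h : G.Step s t) (u : List (GSym N A)) :
    G.Step (s ++ u) (t ++ u) := by
  obtain ⟨x, y, v, w, hr, rfl, rfl⟩ := h
  exact ⟨x, y ++ u, v, w, hr, by simp, by simp⟩

lemma Step.append_right {s t : List (GSym N A)} (h : G.Step s t) (u : List (GSym N A)) :
    G.Step (u ++ s) (u ++ t) := by
  obtain ⟨x, y, v, w, hr, rfl, rfl⟩ := h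
  exact ⟨u ++ x, y, v, w, hr, by simp, by simp⟩

lemma Derives.append {s t s' t' : List (GSym N A)} (h : G.Derives s t)
    (h' : G.Derives s' t') : G.Derives (s ++ s') (t ++ t') :=
  (Relation.ReflTransGen.lift (· ++ s')
      (fun _ _ (hst : G.Step _ _) => hst.append_left s') _ _ h).trans
    (Relation.ReflTransGen.lift (t ++ ·)
      (fun _ _ (hst : G.Step _ _) => hst.append_right t) _ _ h')

lemma derives_of_mem_rules {v : N} {w : List (GSym N A)} (hr : (v, w) ∈ G.rules) :
    G.Derives [GSym.nt v] w :=
  Relation.ReflTransGen.single ⟨[], [], v, w, hr, rfl, by simp⟩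

end CFG

namespace PathLabel

variable {E : Set (V × A × V)}

lemma append {a c b : V} {l₁ l₂ : List A} (h₁ : PathLabel E a l₁ c)
    (h₂ : PathLabel E c l₂ b) : PathLabel E a (l₁ ++ l₂) b := by
  induction h₁ with
  | nil => exact h₂
  | cons he _ ih => exact .cons he (ih h₂)

end PathLabel

lemma Theta.sound {E : Set (V × A × V)} {G : CFG N A} {v : N} {a b : V}
    (h : Theta E G v a b) : ∃ ls ∈ G.Lang v, PathLabel E a ls b := by
  induction h with
  | eps a hr => exact ⟨[], CFG.derives_of_mem_rules hr, .nil a⟩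
  | @tm _ _ _ l he hr => exact ⟨[l], CFG.derives_of_mem_rules hr, .cons he (.nil _)⟩
  | comp _ _ hr ih₁ ih₂ =>
    obtain ⟨ls₁, hl₁, hp₁⟩ := ih₁
    obtain ⟨ls₂, hl₂, hp₂⟩ := ih₂
    refine ⟨ls₁ ++ ls₂, ?_, hp₁.append hp₂⟩
    show G.Derives _ _
    rw [List.map_append]
    exact (CFG.derives_of_mem_rules hr).trans (hl₁.append hl₂)

inductive FormPath (E : Set (V × A × V)) (G : CFG N A) : V → List (GSym N A) → V → Prop
  | nil (a : V) : FormPath E G a [] a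
  | tm {a c b : V} {l : A} {s : List (GSym N A)} :
      (a, l, c) ∈ E → FormPath E G c s b → FormPath E G a (GSym.tm l :: s) b
  | nt {a c b : V} {u : N} {s : List (GSym N A)} :
      Theta E G u a c → FormPath E G c s b → FormPath E G a (GSym.nt u :: s) b

namespace FormPath

variable {E : Set (V × A × V)} {G : CFG N A}

lemma append {a c b : V} {s t : List (GSym N A)} (h₁ : FormPath E G a s c)
    (h₂ : FormPath E G c t b) : FormPath E G a (s ++ t) b := by
  induction h₁ with
  | nil => exact h₂
  | tm he _ ih => exact .tm he (ih h₂)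
  | nt hθ _ ih => exact .nt hθ (ih h₂)

lemma of_append {s t : List (GSym N A)} {a b : V} (h : FormPath E G a (s ++ t) b) :
    ∃ c, FormPath E G a s c ∧ FormPath E G c t b := by
  induction s generalizing a with
  | nil => exact ⟨a, .nil a, h⟩
  | cons x s ih =>
    cases h with
    | tm he hp =>
      obtain ⟨c, h₁, h₂⟩ := ih hp
      exact ⟨c, .tm he h₁, h₂⟩
    | nt hθ hp =>
      obtain ⟨c, h₁, h₂⟩ := ih hp
      exact ⟨c, .nt hθ h₁, h₂⟩

lemma nt_singleton_iff {u : N} {a b : V} : FormPath E G a [GSym.nt u] b ↔ Theta E G u a b := by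
  constructor
  · rintro (_ | _ | ⟨hθ, ⟨⟩⟩)
    exact hθ
  · exact fun hθ => .nt hθ (.nil b)

lemma map_tm_iff {ls : List A} {a b : V} :
    FormPath E G a (ls.map GSym.tm) b ↔ PathLabel E a ls b := by
  induction ls generalizing a with
  | nil => constructor <;> rintro ⟨⟩ <;> exact .nil _
  | cons l ls ih =>
    constructor
    · rintro (_ | ⟨he, hp⟩)
      exact .cons he (ih.mp hp)
    · rintro (_ | ⟨he, hp⟩)
      exact .tm he (ih.mpr hp)

lemma theta_of_mem_rules (hnf : G.NormForm) {v : N} {w : List (GSym N A)} {a b : V}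
    (hr : (v, w) ∈ G.rules) (h : FormPath E G a w b) : Theta E G v a b := by
  rcases hnf _ hr with ⟨u, u', rfl⟩ | ⟨l, rfl⟩ | rfl
  · obtain ⟨c, hu, hu'⟩ := of_append (s := [GSym.nt u]) h
    exact .comp (nt_singleton_iff.mp hu) (nt_singleton_iff.mp hu') hr
  · rcases h with _ | ⟨he, ⟨⟩⟩
    exact .tm he hr
  · rcases h with ⟨⟩
    exact .eps a hr

lemma of_step (hnf : G.NormForm) {s t : List (GSym N A)} {a b : V} (hst : G.Step s t)
    (h : FormPath E G a t b) : FormPath E G a s b := by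
  obtain ⟨x, y, v, w, hr, rfl, rfl⟩ := hst
  obtain ⟨d, hxw, hy⟩ := of_append h
  obtain ⟨c, hx, hw⟩ := of_append hxw
  simpa using hx.append (.nt (theta_of_mem_rules hnf hr hw) hy)

lemma of_derives (hnf : G.NormForm) {s t : List (GSym N A)} {a b : V} (hst : G.Derives s t)
    (h : FormPath E G a t b) : FormPath E G a s b := by
  induction hst with
  | refl => exact h
  | tail _ hstep ih => exact ih (of_step hnf hstep h)

end FormPath

/-- for a grammar in norm form, (v, a, b) ∈ Θ iff there is a path from a
to b whose label string belongs to L(𝒢_v). -/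
theorem theta_correct {V A N : Type} (E : Set (V × A × V)) (G : CFG N A)
    (hnf : G.NormForm) (v : N) (a b : V) :
    Theta E G v a b ↔ ∃ ls ∈ G.Lang v, PathLabel E a ls b := by
  refine ⟨Theta.sound, ?_⟩
  rintro ⟨ls, hls, hp⟩
  exact FormPath.nt_singleton_iff.mp (FormPath.of_derives hnf hls (FormPath.map_tm_iff.mpr hp))
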